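/- Let I=(i_1,…,i_r) be a composition of n. A permutation σ ∈ S_n has a decreasing tree whose shape is the right comb of I if and only if σ, written as a word, factors as a concatenation σ = u_1 u_2 ⋯ u_r where each u_j is a strictly increasing word of length i_j whose last letter is greater than every letter appearing to its right in σ. -/

import Mathlib

/-!
The root of a decreasing tree is the first occurrence of the largest letter, so `decShape w` is
`node s t` exactly when `w = L ++ m :: R` with every letter of `L` below `m`, every letter of `R`
at most `m`, `decShape L = s` and `decShape R = t`. A left comb arises this way only when `R` is
empty, so by induction the words whose shape is a left comb are the increasing ones. Peeling off
the top node of the right comb of `i :: J` therefore splits `w` into an increasing first block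
`L ++ [m]` of length `i`, whose last letter `m` dominates the rest `R` (strictly, since the letters
of a permutation are distinct), followed by a word `R` of shape `rightComb J`, handled by induction.
-/

/-- Unlabeled binary trees. -/
inductive BTree : Type
  | leaf : BTree
  | node : BTree → BTree → BTree
deriving DecidableEq

/-- Auxiliary, fuel-based computation of the shape of the decreasing tree of a word
with distinct letters: the root is the largest letter, and the left (resp. right)
subtree is the decreasing tree of the factor to its left (resp. right). -/
def decShapeAux : ℕ → List ℕ → BTree
  | 0, _ => BTree.leaf
  | _, [] => BTree.leaf
  | fuel + 1, w =>
      let m := w.foldr max 0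
      let k := w.idxOf m
      BTree.node (decShapeAux fuel (w.take k)) (decShapeAux fuel (w.drop (k + 1)))

/-- The shape of the decreasing tree of a word with distinct letters. -/
def decShape (w : List ℕ) : BTree := decShapeAux w.length w

/-- The left comb with `m` nodes: a chain where each node after the first is the
left child of the previous one. -/
def leftComb : ℕ → BTree
  | 0 => BTree.leaf
  | m + 1 => BTree.node (leftComb m) BTree.leaf

/-- The right comb of a composition `(i₁,…,i_r)`: a chain of `i₁` nodes going left,
whose topmost node carries as right child the right comb of `(i₂,…,i_r)`. -/
def rightComb : List ℕ → BTree
  | [] => BTree.leaf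
  | i :: J => BTree.node (leftComb (i - 1)) (rightComb J)

theorem List.exists_eq_append_cons_first_max {α : Type*} [LinearOrder α] :
    ∀ {w : List α}, w ≠ [] → ∃ L m R, w = L ++ m :: R ∧ (∀ x ∈ L, x < m) ∧ ∀ x ∈ R, x ≤ m
  | [a], _ => ⟨[], a, [], rfl, by simp, by simp⟩
  | a :: b :: t, _ => by
    obtain ⟨L, m, R, h, hL, hR⟩ := exists_eq_append_cons_first_max (w := b :: t) (by simp)
    rcases lt_or_ge a m with ham | hma
    · exact ⟨a :: L, m, R, by simp [h], List.forall_mem_cons.mpr ⟨ham, hL⟩, hR⟩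
    · refine ⟨[], a, b :: t, rfl, by simp, fun x hx => ?_⟩
      rw [h, List.mem_append, List.mem_cons] at hx
      rcases hx with hx | rfl | hx
      exacts [(hL x hx).le.trans hma, hma, (hR x hx).trans hma]

theorem List.isChain_lt_append_singleton_iff {α : Type*} [Preorder α] {L : List α} {m : α} :
    (L ++ [m]).IsChain (· < ·) ↔ L.IsChain (· < ·) ∧ ∀ x ∈ L, x < m := by
  simp [List.isChain_iff_pairwise, List.pairwise_append]

theorem decShapeAux_succ {fuel : ℕ} {w : List ℕ} (hw : w ≠ []) :
    decShapeAux (fuel + 1) w =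
      BTree.node (decShapeAux fuel (w.take (w.idxOf (w.foldr max 0))))
        (decShapeAux fuel (w.drop (w.idxOf (w.foldr max 0) + 1))) := by
  cases w
  · contradiction
  · rfl

theorem decShapeAux_eq_of_length_le : ∀ {f g : ℕ} {w : List ℕ}, w.length ≤ f → w.length ≤ g →
    decShapeAux f w = decShapeAux g w
  | f, g, [], _, _ => by cases f <;> cases g <;> rfl
  | f + 1, g + 1, a :: t, hf, hg => by
    have hk : (a :: t).idxOf ((a :: t).foldr max 0) < t.length + 1 :=
      List.idxOf_lt_length_iff.mpr
        (List.maximum_mem (List.foldr_max_of_ne_nil (List.cons_ne_nil a t)).symm)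
    rw [decShapeAux_succ (List.cons_ne_nil a t), decShapeAux_succ (List.cons_ne_nil a t)]
    simp only [List.length_cons] at hf hg
    congr 1 <;> apply decShapeAux_eq_of_length_le <;>
      simp only [List.length_take, List.length_drop, List.length_cons] <;> omega

theorem decShapeAux_eq_decShape {fuel : ℕ} {w : List ℕ} (h : w.length ≤ fuel) :
    decShapeAux fuel w = decShape w :=
  decShapeAux_eq_of_length_le h le_rfl

theorem decShape_append_cons {L R : List ℕ} {m : ℕ} (hL : ∀ x ∈ L, x < m) (hR : ∀ x ∈ R, x ≤ m) :
    decShape (L ++ m :: R) = .node (decShape L) (decShape R) := by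
  have hmax : (L ++ m :: R).foldr max 0 = m := by
    refine le_antisymm (List.max_le_of_forall_le _ _ fun x hx => ?_)
      (List.le_max_of_le' 0 (by simp) le_rfl)
    rw [List.mem_append, List.mem_cons] at hx
    rcases hx with hx | rfl | hx
    exacts [(hL x hx).le, le_rfl, hR x hx]
  have hidx : (L ++ m :: R).idxOf m = L.length := by
    rw [List.idxOf_append_of_notMem fun h => (hL m h).false, List.idxOf_cons_self, add_zero]
  have hdrop : (L ++ m :: R).drop (L.length + 1) = R := by simp
  have hlen : (L ++ m :: R).length = L.length + R.length + 1 := by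
    simp only [List.length_append, List.length_cons]; omega
  rw [decShape, hlen, decShapeAux_succ (by simp), hmax, hidx, List.take_left, hdrop,
    decShapeAux_eq_decShape (by omega), decShapeAux_eq_decShape (by omega)]

theorem decShape_eq_leaf_iff {w : List ℕ} : decShape w = .leaf ↔ w = [] := by
  refine ⟨fun h => ?_, fun h => h ▸ rfl⟩
  by_contra hw
  obtain ⟨L, m, R, rfl, hL, hR⟩ := List.exists_eq_append_cons_first_max hw
  rw [decShape_append_cons hL hR] at h
  cases h

theorem decShape_eq_node_iff {w : List ℕ} {s t : BTree} :
    decShape w = .node s t ↔ ∃ L m R, w = L ++ m :: R ∧ (∀ x ∈ L, x < m) ∧ (∀ x ∈ R, x ≤ m) ∧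
      decShape L = s ∧ decShape R = t := by
  constructor
  · intro h
    have hw : w ≠ [] := by rintro rfl; cases h
    obtain ⟨L, m, R, rfl, hL, hR⟩ := List.exists_eq_append_cons_first_max hw
    rw [decShape_append_cons hL hR, BTree.node.injEq] at h
    exact ⟨L, m, R, rfl, hL, hR, h⟩
  · rintro ⟨L, m, R, rfl, hL, hR, rfl, rfl⟩
    exact decShape_append_cons hL hR

theorem decShape_eq_leftComb_iff {k : ℕ} {w : List ℕ} :
    decShape w = leftComb k ↔ w.IsChain (· < ·) ∧ w.length = k := by
  induction k generalizing w with
  | zero =>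
    rw [leftComb, decShape_eq_leaf_iff, List.length_eq_zero_iff]
    exact ⟨fun h => ⟨h ▸ .nil, h⟩, And.right⟩
  | succ k ih =>
    rw [leftComb, decShape_eq_node_iff]
    constructor
    · rintro ⟨L, m, R, rfl, hL, -, hdL, hdR⟩
      obtain rfl := decShape_eq_leaf_iff.mp hdR
      obtain ⟨hc, hlen⟩ := ih.mp hdL
      exact ⟨List.isChain_lt_append_singleton_iff.mpr ⟨hc, hL⟩, by simp [hlen]⟩
    · rintro ⟨hc, hlen⟩
      obtain ⟨L, m, rfl⟩ : ∃ L m, w = L ++ [m] :=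
        (List.eq_nil_or_concat' w).resolve_left (by rintro rfl; cases hlen)
      obtain ⟨hcL, hL⟩ := List.isChain_lt_append_singleton_iff.mp hc
      exact ⟨L, m, [], rfl, hL, by simp, ih.mpr ⟨hcL, by simpa using hlen⟩, rfl⟩

def IsRightCombFactorization (us : List (List ℕ)) : Prop :=
  (∀ u ∈ us, u.IsChain (· < ·)) ∧
    ∀ j < us.length, ∀ l, (us.getD j []).getLast? = some l →
      ∀ x ∈ (us.drop (j + 1)).flatten, x < l

theorem isRightCombFactorization_nil : IsRightCombFactorization [] := by
  simp [IsRightCombFactorization]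

theorem isRightCombFactorization_cons {u : List ℕ} {vs : List (List ℕ)} :
    IsRightCombFactorization (u :: vs) ↔ u.IsChain (· < ·) ∧
      (∀ l ∈ u.getLast?, ∀ x ∈ vs.flatten, x < l) ∧ IsRightCombFactorization vs := by
  constructor
  · rintro ⟨hc, hd⟩
    exact ⟨hc u (by simp), fun l hl => hd 0 (by simp) l hl,
      fun v hv => hc v (by simp [hv]), fun j hj => hd (j + 1) (by simpa using hj)⟩
  · rintro ⟨hu, hl, hc, hd⟩
    refine ⟨List.forall_mem_cons.mpr ⟨hu, hc⟩, ?_⟩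
    rintro (_ | j) hj
    exacts [hl, hd j (by simpa using hj)]

theorem decShape_eq_rightComb_iff_of_nodup {I w : List ℕ} (hI : ∀ i ∈ I, 0 < i) (hw : w.Nodup) :
    decShape w = rightComb I ↔
      ∃ us : List (List ℕ), us.flatten = w ∧ us.map List.length = I ∧
        IsRightCombFactorization us := by
  induction I generalizing w with
  | nil =>
    rw [rightComb, decShape_eq_leaf_iff]
    simp [isRightCombFactorization_nil, eq_comm]
  | cons i J ih =>
    obtain ⟨hi, hJ⟩ := List.forall_mem_cons.mp hI
    rw [rightComb, decShape_eq_node_iff]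
    constructor
    · rintro ⟨L, m, R, rfl, hL, hR, hdL, hdR⟩
      obtain ⟨hmR, hRnd⟩ := List.nodup_cons.mp (hw.sublist (List.sublist_append_right L _))
      obtain ⟨hcL, hlenL⟩ := decShape_eq_leftComb_iff.mp hdL
      obtain ⟨vs, rfl, rfl, hvs⟩ := (ih hJ hRnd).mp hdR
      refine ⟨(L ++ [m]) :: vs, by simp, by simp [hlenL]; omega,
        isRightCombFactorization_cons.mpr ⟨List.isChain_lt_append_singleton_iff.mpr ⟨hcL, hL⟩,
          ?_, hvs⟩⟩
      simp only [List.getLast?_concat, Option.mem_some_iff, forall_eq']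
      exact fun x hx => lt_of_le_of_ne (hR x hx) (ne_of_mem_of_not_mem hx hmR)
    · rintro ⟨_ | ⟨u, vs⟩, rfl, hlen, hus⟩
      · cases hlen
      obtain ⟨hlu, rfl⟩ := List.cons.inj hlen
      obtain ⟨hcu, hlast, hvs⟩ := isRightCombFactorization_cons.mp hus
      obtain ⟨L, m, rfl⟩ : ∃ L m, u = L ++ [m] :=
        (List.eq_nil_or_concat' u).resolve_left (by rintro rfl; simp at hlu; omega)
      obtain ⟨hcL, hL⟩ := List.isChain_lt_append_singleton_iff.mp hcu
      have hR : ∀ x ∈ vs.flatten, x < m := hlast m (by simp)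
      refine ⟨L, m, vs.flatten, by simp, hL, fun x hx => (hR x hx).le,
        decShape_eq_leftComb_iff.mpr ⟨hcL, by simp at hlu; omega⟩,
        (ih hJ (hw.sublist ?_)).mpr ⟨vs, rfl, rfl, hvs⟩⟩
      simp

theorem decShape_eq_rightComb_iff_general (n : ℕ) (I : List ℕ) (hI : ∀ i ∈ I, 0 < i)
    (w : List ℕ) (hw : w.Perm ((List.range n).map (· + 1))) :
    decShape w = rightComb I ↔
      ∃ us : List (List ℕ), us.flatten = w ∧ us.map List.length = I ∧
        (∀ u ∈ us, u.Chain' (· < ·)) ∧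
        (∀ j < us.length, ∀ l, (us.getD j []).getLast? = some l →
          ∀ x ∈ (us.drop (j + 1)).flatten, x < l) :=
  decShape_eq_rightComb_iff_of_nodup hI
    (hw.nodup_iff.mpr (List.nodup_range.map (add_left_injective 1)))

/-- A permutation (word) `w` of `{1,…,n}` has decreasing tree of shape the right comb
of a composition `I = (i₁,…,i_r)` of `n` iff `w` factors as `u₁u₂⋯u_r` where each `u_j`
is strictly increasing of length `i_j` and its last letter is greater than every
letter to its right in `w`. -/
theorem decShape_eq_rightComb_iff (n : ℕ) (I : List ℕ) (hI : ∀ i ∈ I, 0 < i)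
    (hsum : I.sum = n) (w : List ℕ) (hw : w.Perm ((List.range n).map (· + 1))) :
    decShape w = rightComb I ↔
      ∃ us : List (List ℕ), us.flatten = w ∧ us.map List.length = I ∧
        (∀ u ∈ us, u.Chain' (· < ·)) ∧
        (∀ j < us.length, ∀ l, (us.getD j []).getLast? = some l →
          ∀ x ∈ (us.drop (j + 1)).flatten, x < l) :=
  decShape_eq_rightComb_iff_general n I hI w hw
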